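/- arXiv:1304.6541 — 3 statements merged into one kernel-verified Lean document; each statement's English description precedes it below -/
import Mathlib

section
/- Let R be an algebra with local units over a commutative ring which is also a firm Frobenius algebra. Then every right R-comodule (M, ρ : M → M ⊗ R) becomes a firm right R-module via m·r := m₀ ε(m₁ r), and this gives an isomorphism between the category of right R-comodules and the category of firm right R-modules. -/
/-!
A comodule `(M, ρ)` becomes a module through `m·r = m₀ ε(m₁ r)`. Coassociativity and the right
Frobenius property `Δ (a r) = a₁ ⊗ a₂ r` give `ρ (m·r) = m₀ ⊗ m₁ r`, whence associativity of the
action; a local unit `e` with `m₁ e = m₁` for the finitely many `m₁` gives `m·e = m₀ ε(m₁) = m`.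
Conversely, a firm module carries the coaction `ρ m = m·e₁ ⊗ e₂` for any local unit `e` fixing `m`:
it does not depend on `e`, since `Δ (f e) = f e₁ ⊗ e₂` by the left Frobenius property and any two
local units are dominated by a third. The two constructions are mutually inverse by the counit
laws in the forms `e₁ ε(e₂ r) = e r` and `ε(s e₁) e₂ = s e`.
-/

open CategoryTheory TensorProduct

universe u

variable (k : Type u) [CommRing k]
variable (R : Type u) [NonUnitalRing R] [Module k R]
  [SMulCommClass k R R] [IsScalarTower k R R]

/-- The category of right `R`-comodules over the `k`-coalgebra `(R, Δ, ε)`. -/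
structure ComodOver (Δ : R →ₗ[k] R ⊗[k] R) (ε : R →ₗ[k] k) where
  carrier : Type u
  [acg : AddCommGroup carrier]
  [mod : Module k carrier]
  ρ : carrier →ₗ[k] carrier ⊗[k] R
  coassoc : ∀ m : carrier,
    (TensorProduct.assoc k carrier R R) ((ρ.rTensor R) (ρ m)) = (Δ.lTensor carrier) (ρ m)
  counit : ∀ m : carrier,
    (TensorProduct.rid k carrier) ((ε.lTensor carrier) (ρ m)) = m

attribute [instance] ComodOver.acg ComodOver.mod

instance (Δ : R →ₗ[k] R ⊗[k] R) (ε : R →ₗ[k] k) : Category (ComodOver k R Δ ε) where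
  Hom X Y := {f : X.carrier →ₗ[k] Y.carrier // ∀ m : X.carrier,
    Y.ρ (f m) = (f.rTensor R) (X.ρ m)}
  id X := ⟨LinearMap.id, by intro m; rw [LinearMap.rTensor_id]; rfl⟩
  comp {X Y Z} f g := ⟨g.val ∘ₗ f.val, by
    intro m
    rw [LinearMap.rTensor_comp]
    simp [f.property m, g.property (f.val m)]⟩
  id_comp f := Subtype.ext (LinearMap.ext fun _ => rfl)
  comp_id f := Subtype.ext (LinearMap.ext fun _ => rfl)
  assoc f g h := Subtype.ext (LinearMap.ext fun _ => rfl)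

/-- The category of firm right modules over an algebra `R` with set of local units
`E`: non-unital modules such that every element is fixed by some local unit. -/
structure FirmModOver (E : Set R) where
  carrier : Type u
  [acg : AddCommGroup carrier]
  [mod : Module k carrier]
  act : carrier ⊗[k] R →ₗ[k] carrier
  assoc : ∀ (m : carrier) (r s : R),
    act (act (m ⊗ₜ[k] r) ⊗ₜ[k] s) = act (m ⊗ₜ[k] (r * s))
  firm : ∀ m : carrier, ∃ e ∈ E, act (m ⊗ₜ[k] e) = m

attribute [instance] FirmModOver.acg FirmModOver.mod

instance (E : Set R) : Category (FirmModOver k R E) where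
  Hom X Y := {f : X.carrier →ₗ[k] Y.carrier // ∀ (m : X.carrier) (r : R),
    f (X.act (m ⊗ₜ[k] r)) = Y.act (f m ⊗ₜ[k] r)}
  id X := ⟨LinearMap.id, fun _ _ => rfl⟩
  comp {X Y Z} f g := ⟨g.val ∘ₗ f.val, by
    intro m r
    simp [f.property m r, g.property (f.val m) r]⟩
  id_comp f := Subtype.ext (LinearMap.ext fun _ => rfl)
  comp_id f := Subtype.ext (LinearMap.ext fun _ => rfl)
  assoc f g h := Subtype.ext (LinearMap.ext fun _ => rfl)

/-- The `R`-action `m ⊗ r ↦ m₀ ε(m₁ r)` induced on a comodule. -/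
noncomputable def actOf (Δ : R →ₗ[k] R ⊗[k] R) (ε : R →ₗ[k] k)
    (X : ComodOver k R Δ ε) : X.carrier ⊗[k] R →ₗ[k] X.carrier :=
  (TensorProduct.rid k X.carrier).toLinearMap ∘ₗ
    (ε.lTensor X.carrier) ∘ₗ
    ((LinearMap.mul' k R).lTensor X.carrier) ∘ₗ
    (TensorProduct.assoc k X.carrier R R).toLinearMap ∘ₗ
    (X.ρ.rTensor R)

section FirmFrobenius

set_option linter.unusedSectionVars false

variable {k R}

def HasLocalUnitsIn (E : Set R) : Prop :=
  ∀ S : Finset R, ∃ e ∈ E, ∀ r ∈ S, e * r = r ∧ r * e = r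

section Comultiplication

variable (Δ : R →ₗ[k] R ⊗[k] R) (ε : R →ₗ[k] k)

def IsCoassoc : Prop :=
  ∀ r : R, (TensorProduct.assoc k R R R) ((Δ.rTensor R) (Δ r)) = (Δ.lTensor R) (Δ r)

def IsLeftCounit : Prop :=
  ∀ r : R, (TensorProduct.lid k R) ((ε.rTensor R) (Δ r)) = r

def IsRightCounit : Prop :=
  ∀ r : R, (TensorProduct.rid k R) ((ε.lTensor R) (Δ r)) = r

def IsLeftLinear : Prop :=
  ∀ r s : R, Δ (r * s) = (TensorProduct.map (LinearMap.mulLeft k r) LinearMap.id) (Δ s)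

def IsRightLinear : Prop :=
  ∀ r s : R, Δ (r * s) = (TensorProduct.map LinearMap.id (LinearMap.mulRight k s)) (Δ r)

end Comultiplication

variable {Δ : R →ₗ[k] R ⊗[k] R} {ε : R →ₗ[k] k}
variable {M N : Type*} [AddCommGroup M] [Module k M] [AddCommGroup N] [Module k N]

variable (ε) in
noncomputable def contract : M ⊗[k] R →ₗ[k] R →ₗ[k] M :=
  TensorProduct.curry ((TensorProduct.rid k M).toLinearMap ∘ₗ ε.lTensor M ∘ₗ
    (LinearMap.mul' k R).lTensor M ∘ₗ (TensorProduct.assoc k M R R).toLinearMap)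

@[simp]
lemma contract_tmul (m : M) (s r : R) : contract ε (m ⊗ₜ[k] s) r = ε (s * r) • m := by
  simp [contract]

lemma contract_apply (t : M ⊗[k] R) (r : R) :
    contract ε t r =
      TensorProduct.rid k M (ε.lTensor M ((LinearMap.mulRight k r).lTensor M t)) := by
  induction t using TensorProduct.induction_on with
  | zero => simp
  | tmul m s => simp
  | add x y hx hy => simp only [map_add, LinearMap.add_apply, hx, hy]

lemma actOf_tmul (X : ComodOver k R Δ ε) (m : X.carrier) (r : R) :
    actOf k R Δ ε X (m ⊗ₜ[k] r) = contract ε (X.ρ m) r :=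
  rfl

lemma contract_rTensor (f : M →ₗ[k] N) (t : M ⊗[k] R) (r : R) :
    contract ε (f.rTensor R t) r = f (contract ε t r) := by
  induction t using TensorProduct.induction_on with
  | zero => simp
  | tmul m s => simp
  | add x y hx hy => simp only [map_add, LinearMap.add_apply, hx, hy]

lemma contract_lTensor_mulRight (t : M ⊗[k] R) (r s : R) :
    contract ε ((LinearMap.mulRight k r).lTensor M t) s = contract ε t (r * s) := by
  have hmul : LinearMap.mulRight k s ∘ₗ LinearMap.mulRight k r = LinearMap.mulRight k (r * s) :=
    LinearMap.ext fun a => mul_assoc a r s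
  rw [contract_apply, contract_apply, ← hmul, LinearMap.lTensor_comp_apply]

lemma lTensor_contract_assoc_rTensor (f : M →ₗ[k] N ⊗[k] R) (t : M ⊗[k] R) (r : R) :
    ((contract ε).flip r).lTensor N (TensorProduct.assoc k N R R (f.rTensor R t)) =
      f (contract ε t r) := by
  induction t using TensorProduct.induction_on with
  | zero => simp
  | add x y hx hy => simp only [map_add, LinearMap.add_apply, hx, hy]
  | tmul m s =>
    rw [LinearMap.rTensor_tmul, contract_tmul, map_smul]
    induction f m using TensorProduct.induction_on with
    | zero => simp
    | tmul n a => simp [TensorProduct.tmul_smul]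
    | add x y hx hy => simp only [TensorProduct.add_tmul, map_add, hx, hy, smul_add]

lemma contract_comul (hcounit : IsRightCounit Δ ε) (hΔ : IsRightLinear Δ) (a r : R) :
    contract ε (Δ a) r = a * r := by
  have har : (LinearMap.mulRight k r).lTensor R (Δ a) = Δ (a * r) := (hΔ a r).symm
  rw [contract_apply, har, hcounit]

lemma rTensor_contract_comul (hΔ : IsLeftLinear Δ) (hcounit : IsLeftCounit Δ ε) (t : M ⊗[k] R)
    (e : R) : (contract ε t).rTensor R (Δ e) = (LinearMap.mulRight k e).lTensor M t := by
  induction t using TensorProduct.induction_on with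
  | zero => simp
  | add x y hx hy => simp only [map_add, LinearMap.rTensor_add, LinearMap.add_apply, hx, hy]
  | tmul n s =>
    have hn : contract ε (n ⊗ₜ[k] s) =
        LinearMap.toSpanSingleton k M n ∘ₗ ε ∘ₗ LinearMap.mulLeft k s :=
      LinearMap.ext fun a => by simp
    have hspan : ∀ y : k ⊗[k] R,
        (LinearMap.toSpanSingleton k M n).rTensor R y = n ⊗ₜ[k] TensorProduct.lid k R y := by
      intro y
      induction y using TensorProduct.induction_on with
      | zero => simp
      | tmul c b => simp [TensorProduct.smul_tmul]
      | add x y hx hy => simp only [map_add, hx, hy, TensorProduct.tmul_add]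
    have hse : (LinearMap.mulLeft k s).rTensor R (Δ e) = Δ (s * e) := (hΔ s e).symm
    rw [hn, LinearMap.rTensor_comp_apply, LinearMap.rTensor_comp_apply, hse, hspan, hcounit,
      LinearMap.lTensor_tmul, LinearMap.mulRight_apply]

lemma rid_lTensor_rTensor {Q : Type*} [AddCommGroup Q] [Module k Q] (g : M →ₗ[k] N)
    (φ : Q →ₗ[k] k) (x : M ⊗[k] Q) :
    TensorProduct.rid k N (φ.lTensor N (g.rTensor Q x)) =
      g (TensorProduct.rid k M (φ.lTensor M x)) := by
  induction x using TensorProduct.induction_on with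
  | zero => simp
  | tmul m a => simp
  | add x y hx hy => simp only [map_add, hx, hy]

lemma exists_lTensor_mulRight_eq_self {E : Set R} (hE : HasLocalUnitsIn E) (t : M ⊗[k] R) :
    ∃ e ∈ E, (LinearMap.mulRight k e).lTensor M t = t := by
  classical
  obtain ⟨S, rfl⟩ := TensorProduct.exists_finset t
  obtain ⟨e, heE, he⟩ := hE (S.image Prod.snd)
  refine ⟨e, heE, ?_⟩
  rw [map_sum]
  refine Finset.sum_congr rfl fun p hp => ?_
  rw [LinearMap.lTensor_tmul, LinearMap.mulRight_apply, (he _ (Finset.mem_image_of_mem _ hp)).2]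

namespace ComodOver

variable (X : ComodOver k R Δ ε)

lemma ρ_actOf (hcounit : IsRightCounit Δ ε) (hΔ : IsRightLinear Δ) (m : X.carrier) (r : R) :
    X.ρ (actOf k R Δ ε X (m ⊗ₜ[k] r)) = (LinearMap.mulRight k r).lTensor X.carrier (X.ρ m) := by
  have hcomul : (contract ε).flip r ∘ₗ Δ = LinearMap.mulRight k r :=
    LinearMap.ext fun a => contract_comul hcounit hΔ a r
  rw [actOf_tmul, ← lTensor_contract_assoc_rTensor, X.coassoc, ← LinearMap.lTensor_comp_apply,
    hcomul]

lemma actOf_assoc (hcounit : IsRightCounit Δ ε) (hΔ : IsRightLinear Δ) (m : X.carrier) (r s : R) :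
    actOf k R Δ ε X (actOf k R Δ ε X (m ⊗ₜ[k] r) ⊗ₜ[k] s) = actOf k R Δ ε X (m ⊗ₜ[k] (r * s)) := by
  rw [actOf_tmul, ρ_actOf X hcounit hΔ, contract_lTensor_mulRight, actOf_tmul]

lemma actOf_tmul_eq_self {m : X.carrier} {e : R}
    (he : (LinearMap.mulRight k e).lTensor X.carrier (X.ρ m) = X.ρ m) :
    actOf k R Δ ε X (m ⊗ₜ[k] e) = m := by
  rw [actOf_tmul, contract_apply, he, X.counit]

lemma exists_actOf_tmul_eq_self {E : Set R} (hE : HasLocalUnitsIn E) (m : X.carrier) :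
    ∃ e ∈ E, actOf k R Δ ε X (m ⊗ₜ[k] e) = m :=
  let ⟨e, heE, he⟩ := exists_lTensor_mulRight_eq_self hE (X.ρ m)
  ⟨e, heE, X.actOf_tmul_eq_self he⟩

variable {X} in
lemma actOf_map {Y : ComodOver k R Δ ε} (f : X ⟶ Y) (m : X.carrier) (r : R) :
    f.val (actOf k R Δ ε X (m ⊗ₜ[k] r)) = actOf k R Δ ε Y (f.val m ⊗ₜ[k] r) := by
  rw [actOf_tmul, actOf_tmul, f.property m, contract_rTensor]

end ComodOver

variable (E : Set R) in
noncomputable def comodToFirmMod (hE : HasLocalUnitsIn E) (hcounit : IsRightCounit Δ ε)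
    (hΔ : IsRightLinear Δ) : ComodOver k R Δ ε ⥤ FirmModOver k R E where
  obj X :=
    { carrier := X.carrier
      act := actOf k R Δ ε X
      assoc := X.actOf_assoc hcounit hΔ
      firm := X.exists_actOf_tmul_eq_self hE }
  map f := ⟨f.val, ComodOver.actOf_map f⟩

namespace FirmModOver

variable {E : Set R} (P : FirmModOver k R E)

def orbitMap (m : P.carrier) : R →ₗ[k] P.carrier :=
  P.act ∘ₗ TensorProduct.mk k P.carrier R m

lemma orbitMap_apply (m : P.carrier) (a : R) : P.orbitMap m a = P.act (m ⊗ₜ[k] a) :=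
  rfl

lemma orbitMap_act (m : P.carrier) (f : R) :
    P.orbitMap (P.act (m ⊗ₜ[k] f)) = P.orbitMap m ∘ₗ LinearMap.mulLeft k f :=
  LinearMap.ext fun a => P.assoc m f a

lemma act_tmul_eq_self_of_mul_eq {m : P.carrier} {a g : R} (ha : P.act (m ⊗ₜ[k] a) = m)
    (hag : a * g = a) : P.act (m ⊗ₜ[k] g) = m := by
  rw [← ha, P.assoc, hag]

variable (Δ) in
/-- `m ↦ m·e₁ ⊗ e₂`, writing `Δ e = e₁ ⊗ e₂`. -/
noncomputable def coactAt (e : R) : P.carrier →ₗ[k] P.carrier ⊗[k] R :=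
  P.act.rTensor R ∘ₗ (TensorProduct.assoc k P.carrier R R).symm.toLinearMap ∘ₗ
    (TensorProduct.mk k P.carrier (R ⊗[k] R)).flip (Δ e)

lemma coactAt_apply (e : R) (m : P.carrier) :
    P.coactAt Δ e m = (P.orbitMap m).rTensor R (Δ e) := by
  simp only [coactAt, LinearMap.comp_apply, LinearMap.flip_apply, TensorProduct.mk_apply]
  induction Δ e using TensorProduct.induction_on with
  | zero => simp
  | tmul a b => simp [orbitMap_apply]
  | add x y hx hy => simp only [TensorProduct.tmul_add, map_add, hx, hy]

lemma coactAt_act (hΔ : IsLeftLinear Δ) (m : P.carrier) (e f : R) :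
    P.coactAt Δ e (P.act (m ⊗ₜ[k] f)) = P.coactAt Δ (f * e) m := by
  rw [coactAt_apply, coactAt_apply, orbitMap_act, LinearMap.rTensor_comp_apply, hΔ]
  rfl

lemma coactAt_eq_coactAt (hE : HasLocalUnitsIn E) (hΔ : IsLeftLinear Δ) {m : P.carrier}
    {e f : R} (hme : P.act (m ⊗ₜ[k] e) = m) (hmf : P.act (m ⊗ₜ[k] f) = m) :
    P.coactAt Δ e m = P.coactAt Δ f m := by
  classical
  obtain ⟨g, -, hg⟩ := hE {e, f}
  have heg : e * g = e := (hg e (by simp)).2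
  have hfg : f * g = f := (hg f (by simp)).2
  calc P.coactAt Δ e m = P.coactAt Δ g (P.act (m ⊗ₜ[k] e)) := by rw [coactAt_act P hΔ, heg]
    _ = P.coactAt Δ g (P.act (m ⊗ₜ[k] f)) := by rw [hme, hmf]
    _ = P.coactAt Δ f m := by rw [coactAt_act P hΔ, hfg]

noncomputable def coact (hE : HasLocalUnitsIn E) (hΔ : IsLeftLinear Δ) :
    P.carrier →ₗ[k] P.carrier ⊗[k] R where
  toFun m := P.coactAt Δ (P.firm m).choose m
  map_add' m n := by
    classical
    obtain ⟨-, hm⟩ := (P.firm m).choose_spec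
    obtain ⟨-, hn⟩ := (P.firm n).choose_spec
    obtain ⟨-, hmn⟩ := (P.firm (m + n)).choose_spec
    obtain ⟨g, -, hg⟩ := hE {(P.firm m).choose, (P.firm n).choose}
    have hmg := P.act_tmul_eq_self_of_mul_eq hm (hg _ (by simp)).2
    have hng := P.act_tmul_eq_self_of_mul_eq hn (hg _ (by simp)).2
    have hmng : P.act ((m + n) ⊗ₜ[k] g) = m + n := by rw [TensorProduct.add_tmul, map_add, hmg, hng]
    rw [P.coactAt_eq_coactAt hE hΔ hmn hmng, P.coactAt_eq_coactAt hE hΔ hm hmg,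
      P.coactAt_eq_coactAt hE hΔ hn hng, map_add]
  map_smul' c m := by
    obtain ⟨-, hm⟩ := (P.firm m).choose_spec
    obtain ⟨-, hcm⟩ := (P.firm (c • m)).choose_spec
    have hcme : P.act ((c • m) ⊗ₜ[k] (P.firm m).choose) = c • m := by
      rw [← TensorProduct.smul_tmul', map_smul, hm]
    rw [RingHom.id_apply, P.coactAt_eq_coactAt hE hΔ hcm hcme, map_smul]

lemma coact_eq_coactAt (hE : HasLocalUnitsIn E) (hΔ : IsLeftLinear Δ) {m : P.carrier} {e : R}
    (hme : P.act (m ⊗ₜ[k] e) = m) : P.coact hE hΔ m = P.coactAt Δ e m :=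
  P.coactAt_eq_coactAt hE hΔ (P.firm m).choose_spec.2 hme

lemma coact_act (hE : HasLocalUnitsIn E) (hΔ : IsLeftLinear Δ) (m : P.carrier) (a : R) :
    P.coact hE hΔ (P.act (m ⊗ₜ[k] a)) = P.coactAt Δ a m := by
  obtain ⟨g, -, hg⟩ := hE {a}
  have hag : a * g = a := (hg a (Finset.mem_singleton_self a)).2
  rw [P.coact_eq_coactAt hE hΔ (e := g) (by rw [P.assoc, hag]), coactAt_act P hΔ, hag]

lemma coact_comp_orbitMap (hE : HasLocalUnitsIn E) (hΔ : IsLeftLinear Δ) (m : P.carrier) :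
    P.coact hE hΔ ∘ₗ P.orbitMap m = (P.orbitMap m).rTensor R ∘ₗ Δ :=
  LinearMap.ext fun a => (P.coact_act hE hΔ m a).trans (P.coactAt_apply a m)

lemma coact_counit (hE : HasLocalUnitsIn E) (hΔ : IsLeftLinear Δ) (hcounit : IsRightCounit Δ ε)
    (m : P.carrier) :
    TensorProduct.rid k P.carrier (ε.lTensor P.carrier (P.coact hE hΔ m)) = m := by
  obtain ⟨e, -, hme⟩ := P.firm m
  rw [P.coact_eq_coactAt hE hΔ hme, coactAt_apply, rid_lTensor_rTensor, hcounit, orbitMap_apply,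
    hme]

lemma coact_coassoc (hE : HasLocalUnitsIn E) (hΔ : IsLeftLinear Δ) (hcoassoc : IsCoassoc Δ)
    (m : P.carrier) :
    TensorProduct.assoc k P.carrier R R ((P.coact hE hΔ).rTensor R (P.coact hE hΔ m)) =
      Δ.lTensor P.carrier (P.coact hE hΔ m) := by
  obtain ⟨e, -, hme⟩ := P.firm m
  set a := P.orbitMap m
  rw [P.coact_eq_coactAt hE hΔ hme, coactAt_apply, ← LinearMap.rTensor_comp_apply,
    coact_comp_orbitMap, LinearMap.rTensor_comp_apply]
  calc TensorProduct.assoc k P.carrier R R ((a.rTensor R).rTensor R (Δ.rTensor R (Δ e)))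
      = a.rTensor (R ⊗[k] R) (TensorProduct.assoc k R R R (Δ.rTensor R (Δ e))) := by
        rw [LinearMap.rTensor_tensor]; simp
    _ = Δ.lTensor P.carrier (a.rTensor R (Δ e)) := by
        rw [hcoassoc]
        exact LinearMap.congr_fun
          ((LinearMap.rTensor_comp_lTensor (f := a) (g := Δ)).trans
            (LinearMap.lTensor_comp_rTensor (f := a) (g := Δ)).symm) _

variable {P} in
lemma coact_map (hE : HasLocalUnitsIn E) (hΔ : IsLeftLinear Δ) {Q : FirmModOver k R E}
    (f : P ⟶ Q) (m : P.carrier) :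
    Q.coact hE hΔ (f.val m) = f.val.rTensor R (P.coact hE hΔ m) := by
  obtain ⟨e, -, hme⟩ := P.firm m
  have hfme : Q.act (f.val m ⊗ₜ[k] e) = f.val m := by rw [← f.property, hme]
  have hfa : Q.orbitMap (f.val m) = f.val ∘ₗ P.orbitMap m :=
    LinearMap.ext fun a => (f.property m a).symm
  rw [Q.coact_eq_coactAt hE hΔ hfme, P.coact_eq_coactAt hE hΔ hme, coactAt_apply, coactAt_apply,
    hfa, LinearMap.rTensor_comp_apply]

end FirmModOver

variable (Δ ε) in
noncomputable def firmModToComod {E : Set R} (hE : HasLocalUnitsIn E) (hΔ : IsLeftLinear Δ)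
    (hcoassoc : IsCoassoc Δ) (hcounit : IsRightCounit Δ ε) :
    FirmModOver k R E ⥤ ComodOver k R Δ ε where
  obj P :=
    { carrier := P.carrier
      ρ := P.coact hE hΔ
      coassoc := P.coact_coassoc hE hΔ hcoassoc
      counit := P.coact_counit hE hΔ hcounit }
  map f := ⟨f.val, FirmModOver.coact_map hE hΔ f⟩


lemma ComodOver.mk_eq_of_ρ_eq (X : ComodOver k R Δ ε) {ρ : X.carrier →ₗ[k] X.carrier ⊗[k] R}
    (hcoassoc hcounit) (h : ρ = X.ρ) :
    (⟨X.carrier, ρ, hcoassoc, hcounit⟩ : ComodOver k R Δ ε) = X := by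
  subst h
  rfl

lemma FirmModOver.mk_eq_of_act_eq {E : Set R} (P : FirmModOver k R E)
    {act : P.carrier ⊗[k] R →ₗ[k] P.carrier} (hassoc hfirm) (h : act = P.act) :
    (⟨P.carrier, act, hassoc, hfirm⟩ : FirmModOver k R E) = P := by
  subst h
  rfl

lemma ComodOver.hom_heq {X X' Y Y' : ComodOver k R Δ ε} (hX : X = X') (hY : Y = Y')
    {f : X ⟶ Y} {g : X' ⟶ Y'} (h : f.val ≍ g.val) : f ≍ g := by
  subst hX hY
  exact heq_of_eq (Subtype.ext (eq_of_heq h))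

lemma FirmModOver.hom_heq {E : Set R} {P P' Q Q' : FirmModOver k R E} (hP : P = P') (hQ : Q = Q')
    {f : P ⟶ Q} {g : P' ⟶ Q'} (h : f.val ≍ g.val) : f ≍ g := by
  subst hP hQ
  exact heq_of_eq (Subtype.ext (eq_of_heq h))

lemma coact_comodToFirmMod {E : Set R} (hE : HasLocalUnitsIn E) (hcounitl : IsLeftCounit Δ ε)
    (hcounitr : IsRightCounit Δ ε) (hΔl : IsLeftLinear Δ) (hΔr : IsRightLinear Δ)
    (X : ComodOver k R Δ ε) : ((comodToFirmMod E hE hcounitr hΔr).obj X).coact hE hΔl = X.ρ := by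
  refine LinearMap.ext fun (m : X.carrier) => ?_
  obtain ⟨e, -, he⟩ := exists_lTensor_mulRight_eq_self hE (X.ρ m)
  let P := (comodToFirmMod E hE hcounitr hΔr).obj X
  have hme : P.act (m ⊗ₜ[k] e) = m := X.actOf_tmul_eq_self he
  refine (P.coact_eq_coactAt hE hΔl hme).trans ((P.coactAt_apply e m).trans ?_)
  exact (rTensor_contract_comul hΔl hcounitl (X.ρ m) e).trans he

lemma actOf_firmModToComod {E : Set R} (hE : HasLocalUnitsIn E) (hcoassoc : IsCoassoc Δ)
    (hcounitr : IsRightCounit Δ ε) (hΔl : IsLeftLinear Δ) (hΔr : IsRightLinear Δ)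
    (P : FirmModOver k R E) :
    actOf k R Δ ε ((firmModToComod Δ ε hE hΔl hcoassoc hcounitr).obj P) = P.act := by
  refine TensorProduct.ext' fun (m : P.carrier) r => ?_
  obtain ⟨e, -, hme⟩ := P.firm m
  change contract ε (P.coact hE hΔl m) r = _
  rw [P.coact_eq_coactAt hE hΔl hme, FirmModOver.coactAt_apply, contract_rTensor,
    contract_comul hcounitr hΔr, FirmModOver.orbitMap_apply, ← P.assoc, hme]
  rfl

lemma comodToFirmMod_comp_firmModToComod {E : Set R} (hE : HasLocalUnitsIn E)
    (hcoassoc : IsCoassoc Δ) (hcounitl : IsLeftCounit Δ ε) (hcounitr : IsRightCounit Δ ε)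
    (hΔl : IsLeftLinear Δ) (hΔr : IsRightLinear Δ) :
    comodToFirmMod E hE hcounitr hΔr ⋙ firmModToComod Δ ε hE hΔl hcoassoc hcounitr =
      𝟭 (ComodOver k R Δ ε) := by
  have hobj : ∀ X : ComodOver k R Δ ε,
      (comodToFirmMod E hE hcounitr hΔr ⋙ firmModToComod Δ ε hE hΔl hcoassoc hcounitr).obj X = X :=
    fun X => X.mk_eq_of_ρ_eq _ _ (coact_comodToFirmMod hE hcounitl hcounitr hΔl hΔr X)
  exact Functor.hext hobj fun X Y _ => ComodOver.hom_heq (hobj X) (hobj Y) HEq.rfl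

lemma firmModToComod_comp_comodToFirmMod {E : Set R} (hE : HasLocalUnitsIn E)
    (hcoassoc : IsCoassoc Δ) (hcounitr : IsRightCounit Δ ε) (hΔl : IsLeftLinear Δ)
    (hΔr : IsRightLinear Δ) :
    firmModToComod Δ ε hE hΔl hcoassoc hcounitr ⋙ comodToFirmMod E hE hcounitr hΔr =
      𝟭 (FirmModOver k R E) := by
  have hobj : ∀ P : FirmModOver k R E,
      (firmModToComod Δ ε hE hΔl hcoassoc hcounitr ⋙ comodToFirmMod E hE hcounitr hΔr).obj P = P :=
    fun P => P.mk_eq_of_act_eq _ _ (actOf_firmModToComod hE hcoassoc hcounitr hΔl hΔr P)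
  exact Functor.hext hobj fun P Q _ => FirmModOver.hom_heq (hobj P) (hobj Q) HEq.rfl

end FirmFrobenius

theorem stmt15 (E : Set R)
    (hlocal : ∀ S : Finset R, ∃ e ∈ E, ∀ r ∈ S, e * r = r ∧ r * e = r)
    (Δ : R →ₗ[k] R ⊗[k] R) (ε : R →ₗ[k] k)
    (hcoassoc : ∀ r : R,
      (TensorProduct.assoc k R R R) ((Δ.rTensor R) (Δ r)) = (Δ.lTensor R) (Δ r))
    (hcounit_l : ∀ r : R, (TensorProduct.lid k R) ((ε.rTensor R) (Δ r)) = r)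
    (hcounit_r : ∀ r : R, (TensorProduct.rid k R) ((ε.lTensor R) (Δ r)) = r)
    (hfrob_l : ∀ r s : R,
      Δ (r * s) = (TensorProduct.map (LinearMap.mulLeft k r) LinearMap.id) (Δ s))
    (hfrob_r : ∀ r s : R,
      Δ (r * s) = (TensorProduct.map LinearMap.id (LinearMap.mulRight k s)) (Δ r)) :
    (∀ X : ComodOver k R Δ ε,
      (∀ (m : X.carrier) (r s : R),
        actOf k R Δ ε X ((actOf k R Δ ε X (m ⊗ₜ[k] r)) ⊗ₜ[k] s) =
          actOf k R Δ ε X (m ⊗ₜ[k] (r * s))) ∧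
      (∀ m : X.carrier, ∃ e ∈ E, actOf k R Δ ε X (m ⊗ₜ[k] e) = m)) ∧
    ∃ (K : ComodOver k R Δ ε ⥤ FirmModOver k R E)
      (L : FirmModOver k R E ⥤ ComodOver k R Δ ε),
      (∀ X : ComodOver k R Δ ε, (K.obj X).carrier = X.carrier) ∧
      (∀ X : ComodOver k R Δ ε, HEq (K.obj X).act (actOf k R Δ ε X)) ∧
      (∀ (X Y : ComodOver k R Δ ε) (f : X ⟶ Y), HEq (K.map f).val f.val) ∧
      K ⋙ L = 𝟭 (ComodOver k R Δ ε) ∧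
      L ⋙ K = 𝟭 (FirmModOver k R E) :=
  ⟨fun X => ⟨X.actOf_assoc hcounit_r hfrob_r, X.exists_actOf_tmul_eq_self hlocal⟩,
    comodToFirmMod E hlocal hcounit_r hfrob_r, firmModToComod Δ ε hlocal hfrob_l hcoassoc hcounit_r,
    fun _ => rfl, fun _ => HEq.rfl, fun _ _ _ => HEq.rfl,
    comodToFirmMod_comp_firmModToComod hlocal hcoassoc hcounit_l hcounit_r hfrob_l hfrob_r,
    firmModToComod_comp_comodToFirmMod hlocal hcoassoc hcounit_r hfrob_l hfrob_r⟩
end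

section
/- Let C be a coalgebra over a field k whose coalgebra structure extends to a non-unital Frobenius algebra with non-degenerate multiplication. Then the map C → C*, c ↦ ε(c·−), is an injective morphism of right C*-modules, and symmetrically c ↦ ε(−·c) is an injective morphism of left C*-modules; hence C is left and right co-Frobenius. -/
/-!
The counit law together with the Frobenius condition gives `(ε ∘ m c) ∗ φ = φ ∘ m c` and
`φ ∗ (ε ∘ m.flip d) = φ ∘ m.flip d`. So `ε(c·−)` determines `φ(c·−)` for every functional `φ`,
hence the map `c·−` and, by non-degeneracy, `c` itself. Since `ψ(c ↼ φ) = (φ ∗ ψ)(c)`, both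
sides of the module-map identity evaluate at `d` to `φ(c·d)`; the left-module case is symmetric.
-/

open TensorProduct

universe u

variable (k : Type u) [Field k]
variable (C : Type u) [AddCommGroup C] [Module k C]

/-- The convolution product on the dual space of a coalgebra `(C, Δ)`. -/
noncomputable def conv (Δ : C →ₗ[k] C ⊗[k] C) (φ ψ : Module.Dual k C) :
    Module.Dual k C :=
  (LinearMap.mul' k k) ∘ₗ (TensorProduct.map φ ψ) ∘ₗ Δ

/-- The right action of the dual algebra on `C`: `c ↼ φ = φ(c₁)c₂`. -/
noncomputable def rAct (Δ : C →ₗ[k] C ⊗[k] C) (c : C) (φ : Module.Dual k C) : C :=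
  (TensorProduct.lid k C) ((TensorProduct.map φ LinearMap.id) (Δ c))

/-- The left action of the dual algebra on `C`: `φ ⇀ c = c₁φ(c₂)`. -/
noncomputable def lAct (Δ : C →ₗ[k] C ⊗[k] C) (φ : Module.Dual k C) (c : C) : C :=
  (TensorProduct.rid k C) ((TensorProduct.map LinearMap.id φ) (Δ c))

section Coalgebra

variable {k C}
variable (Δ : C →ₗ[k] C ⊗[k] C)

lemma conv_counit_left (ε : Module.Dual k C)
    (hcounit_l : ∀ c : C, (TensorProduct.lid k C) ((ε.rTensor C) (Δ c)) = c)
    (φ : Module.Dual k C) : conv k C Δ ε φ = φ := by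
  have hpair : LinearMap.mul' k k ∘ₗ TensorProduct.map ε φ
      = φ ∘ₗ (TensorProduct.lid k C).toLinearMap ∘ₗ ε.rTensor C := by
    ext a b
    simp
  ext c
  simpa [conv, hcounit_l] using LinearMap.congr_fun hpair (Δ c)

lemma conv_counit_right (ε : Module.Dual k C)
    (hcounit_r : ∀ c : C, (TensorProduct.rid k C) ((ε.lTensor C) (Δ c)) = c)
    (φ : Module.Dual k C) : conv k C Δ φ ε = φ := by
  have hpair : LinearMap.mul' k k ∘ₗ TensorProduct.map φ ε
      = φ ∘ₗ (TensorProduct.rid k C).toLinearMap ∘ₗ ε.lTensor C := by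
    ext a b
    simp [mul_comm]
  ext c
  simpa [conv, hcounit_r] using LinearMap.congr_fun hpair (Δ c)

lemma conv_comp_left (f : C →ₗ[k] C)
    (hf : ∀ d : C, Δ (f d) = (TensorProduct.map f LinearMap.id) (Δ d))
    (φ ψ : Module.Dual k C) : conv k C Δ (φ ∘ₗ f) ψ = conv k C Δ φ ψ ∘ₗ f := by
  ext d
  simp only [conv, LinearMap.comp_apply, hf, ← LinearMap.rTensor_def, LinearMap.map_rTensor]

lemma conv_comp_right (f : C →ₗ[k] C)
    (hf : ∀ d : C, Δ (f d) = (TensorProduct.map LinearMap.id f) (Δ d))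
    (φ ψ : Module.Dual k C) : conv k C Δ φ (ψ ∘ₗ f) = conv k C Δ φ ψ ∘ₗ f := by
  ext d
  simp only [conv, LinearMap.comp_apply, hf, ← LinearMap.lTensor_def, LinearMap.map_lTensor]

lemma apply_rAct (c : C) (φ ψ : Module.Dual k C) :
    ψ (rAct k C Δ c φ) = conv k C Δ φ ψ c := by
  have hpair : ψ ∘ₗ (TensorProduct.lid k C).toLinearMap ∘ₗ TensorProduct.map φ LinearMap.id
      = LinearMap.mul' k k ∘ₗ TensorProduct.map φ ψ := by
    ext a b
    simp
  exact LinearMap.congr_fun hpair (Δ c)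

lemma apply_lAct (φ : Module.Dual k C) (c : C) (ψ : Module.Dual k C) :
    ψ (lAct k C Δ φ c) = conv k C Δ ψ φ c := by
  have hpair : ψ ∘ₗ (TensorProduct.rid k C).toLinearMap ∘ₗ TensorProduct.map LinearMap.id φ
      = LinearMap.mul' k k ∘ₗ TensorProduct.map ψ φ := by
    ext a b
    simp [mul_comm]
  exact LinearMap.congr_fun hpair (Δ c)

end Coalgebra

section Frobenius

variable {k C}
variable {Δ : C →ₗ[k] C ⊗[k] C} {ε : Module.Dual k C} {m : C →ₗ[k] C →ₗ[k] C}

lemma conv_counit_comp_mul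
    (hcounit_l : ∀ c : C, (TensorProduct.lid k C) ((ε.rTensor C) (Δ c)) = c)
    (hfrob_l : ∀ c d : C, Δ (m c d) = (TensorProduct.map (m c) LinearMap.id) (Δ d))
    (c : C) (φ : Module.Dual k C) : conv k C Δ (ε ∘ₗ m c) φ = φ ∘ₗ m c := by
  rw [conv_comp_left Δ (m c) (hfrob_l c), conv_counit_left Δ ε hcounit_l]

lemma conv_counit_comp_mul_flip
    (hcounit_r : ∀ c : C, (TensorProduct.rid k C) ((ε.lTensor C) (Δ c)) = c)
    (hfrob_r : ∀ c d : C, Δ (m c d) = (TensorProduct.map LinearMap.id (m.flip d)) (Δ c))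
    (d : C) (φ : Module.Dual k C) : conv k C Δ φ (ε ∘ₗ m.flip d) = φ ∘ₗ m.flip d := by
  rw [conv_comp_right Δ (m.flip d) (fun c => hfrob_r c d), conv_counit_right Δ ε hcounit_r]

lemma injective_counit_comp_mul
    (hcounit_l : ∀ c : C, (TensorProduct.lid k C) ((ε.rTensor C) (Δ c)) = c)
    (hfrob_l : ∀ c d : C, Δ (m c d) = (TensorProduct.map (m c) LinearMap.id) (Δ d))
    (hnd_l : ∀ c : C, (∀ d : C, m c d = 0) → c = 0) :
    Function.Injective fun c : C => ε ∘ₗ m c := by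
  intro a b hab
  have hdual : ∀ φ : Module.Dual k C, φ ∘ₗ m a = φ ∘ₗ m b := fun φ => by
    rw [← conv_counit_comp_mul hcounit_l hfrob_l a, ← conv_counit_comp_mul hcounit_l hfrob_l b]
    exact congrArg (conv k C Δ · φ) hab
  refine sub_eq_zero.mp (hnd_l _ fun d => (Module.forall_dual_apply_eq_zero_iff k _).mp ?_)
  intro φ
  simpa [sub_eq_zero] using LinearMap.congr_fun (hdual φ) d

lemma injective_counit_comp_mul_flip
    (hcounit_r : ∀ c : C, (TensorProduct.rid k C) ((ε.lTensor C) (Δ c)) = c)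
    (hfrob_r : ∀ c d : C, Δ (m c d) = (TensorProduct.map LinearMap.id (m.flip d)) (Δ c))
    (hnd_r : ∀ c : C, (∀ d : C, m d c = 0) → c = 0) :
    Function.Injective fun c : C => ε ∘ₗ m.flip c := by
  intro a b hab
  have hdual : ∀ φ : Module.Dual k C, φ ∘ₗ m.flip a = φ ∘ₗ m.flip b := fun φ => by
    rw [← conv_counit_comp_mul_flip hcounit_r hfrob_r a,
      ← conv_counit_comp_mul_flip hcounit_r hfrob_r b]
    exact congrArg (conv k C Δ φ ·) hab
  refine sub_eq_zero.mp (hnd_r _ fun d => (Module.forall_dual_apply_eq_zero_iff k _).mp ?_)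
  intro φ
  simpa [sub_eq_zero] using LinearMap.congr_fun (hdual φ) d

variable (hcounit_l : ∀ c : C, (TensorProduct.lid k C) ((ε.rTensor C) (Δ c)) = c)
  (hcounit_r : ∀ c : C, (TensorProduct.rid k C) ((ε.lTensor C) (Δ c)) = c)
  (hfrob_l : ∀ c d : C, Δ (m c d) = (TensorProduct.map (m c) LinearMap.id) (Δ d))
  (hfrob_r : ∀ c d : C, Δ (m c d) = (TensorProduct.map LinearMap.id (m.flip d)) (Δ c))
include hcounit_l hcounit_r hfrob_l hfrob_r

lemma counit_comp_mul_rAct (c : C) (φ : Module.Dual k C) :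
    ε ∘ₗ m (rAct k C Δ c φ) = conv k C Δ (ε ∘ₗ m c) φ := by
  ext d
  calc ε (m (rAct k C Δ c φ) d) = conv k C Δ φ (ε ∘ₗ m.flip d) c :=
        apply_rAct Δ c φ (ε ∘ₗ m.flip d)
    _ = φ (m c d) := by rw [conv_counit_comp_mul_flip hcounit_r hfrob_r]; rfl
    _ = conv k C Δ (ε ∘ₗ m c) φ d := by rw [conv_counit_comp_mul hcounit_l hfrob_l]; rfl

lemma counit_comp_mul_flip_lAct (φ : Module.Dual k C) (c : C) :
    ε ∘ₗ m.flip (lAct k C Δ φ c) = conv k C Δ φ (ε ∘ₗ m.flip c) := by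
  ext d
  calc ε (m d (lAct k C Δ φ c)) = conv k C Δ (ε ∘ₗ m d) φ c :=
        apply_lAct Δ φ c (ε ∘ₗ m d)
    _ = φ (m d c) := by rw [conv_counit_comp_mul hcounit_l hfrob_l]; rfl
    _ = conv k C Δ φ (ε ∘ₗ m.flip c) d := by
      rw [conv_counit_comp_mul_flip hcounit_r hfrob_r]; rfl

end Frobenius

theorem stmt16 (Δ : C →ₗ[k] C ⊗[k] C) (ε : C →ₗ[k] k)
    (hcounit_l : ∀ c : C, (TensorProduct.lid k C) ((ε.rTensor C) (Δ c)) = c)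
    (hcounit_r : ∀ c : C, (TensorProduct.rid k C) ((ε.lTensor C) (Δ c)) = c)
    (m : C →ₗ[k] C →ₗ[k] C)
    -- the Frobenius condition: `Δ` is a morphism of bimodules
    (hfrob_l : ∀ c d : C,
      Δ (m c d) = (TensorProduct.map (m c) LinearMap.id) (Δ d))
    (hfrob_r : ∀ c d : C,
      Δ (m c d) = (TensorProduct.map LinearMap.id (m.flip d)) (Δ c))
    -- non-degeneracy of the multiplication
    (hnd_l : ∀ c : C, (∀ d : C, m c d = 0) → c = 0)
    (hnd_r : ∀ c : C, (∀ d : C, m d c = 0) → c = 0) :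
    Function.Injective (fun c : C => ε ∘ₗ m c) ∧
    (∀ (c : C) (φ : Module.Dual k C),
      ε ∘ₗ m (rAct k C Δ c φ) = conv k C Δ (ε ∘ₗ m c) φ) ∧
    Function.Injective (fun c : C => ε ∘ₗ m.flip c) ∧
    (∀ (φ : Module.Dual k C) (c : C),
      ε ∘ₗ m.flip (lAct k C Δ φ c) = conv k C Δ φ (ε ∘ₗ m.flip c)) := by
  exact ⟨injective_counit_comp_mul hcounit_l hfrob_l hnd_l,
    counit_comp_mul_rAct hcounit_l hcounit_r hfrob_l hfrob_r,
    injective_counit_comp_mul_flip hcounit_r hfrob_r hnd_r,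
    counit_comp_mul_flip_lAct hcounit_l hcounit_r hfrob_l hfrob_r⟩
end

section
/- Let C be a coalgebra over a field with a non-unital Frobenius algebra structure with non-degenerate multiplication. Then the map C → C*, c ↦ ε(c·−), is anti-multiplicative: ε(c·−) ∗ ε(c'·−) = ε((c'c)·−) in the convolution algebra C*. -/
open TensorProduct

universe u

variable (k : Type u) [Field k]
variable (C : Type u) [AddCommGroup C] [Module k C]

/-- for a coalgebra over a field with a non-unital Frobenius algebra
structure with non-degenerate multiplication, the map `c ↦ ε(c·−) : C → C*` is
anti-multiplicative: `ε(c·−) ∗ ε(c'·−) = ε((c'c)·−)`. -/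
theorem stmt17 (Δ : C →ₗ[k] C ⊗[k] C) (ε : C →ₗ[k] k)
    (hcoassoc : ∀ c : C,
      (TensorProduct.assoc k C C C) ((Δ.rTensor C) (Δ c)) = (Δ.lTensor C) (Δ c))
    (hcounit_l : ∀ c : C, (TensorProduct.lid k C) ((ε.rTensor C) (Δ c)) = c)
    (hcounit_r : ∀ c : C, (TensorProduct.rid k C) ((ε.lTensor C) (Δ c)) = c)
    (m : C →ₗ[k] C →ₗ[k] C)
    (hassoc : ∀ a b c : C, m (m a b) c = m a (m b c))
    (hfrob_l : ∀ c d : C,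
      Δ (m c d) = (TensorProduct.map (m c) LinearMap.id) (Δ d))
    (hfrob_r : ∀ c d : C,
      Δ (m c d) = (TensorProduct.map LinearMap.id (m.flip d)) (Δ c))
    (hnd_l : ∀ c : C, (∀ d : C, m c d = 0) → c = 0)
    (hnd_r : ∀ c : C, (∀ d : C, m d c = 0) → c = 0) :
    ∀ c c' : C, conv k C Δ (ε ∘ₗ m c) (ε ∘ₗ m c') = ε ∘ₗ m (m c' c) := by
  intro c c'
  ext d
  have key : ∀ x : C ⊗[k] C,
      (LinearMap.mul' k k) (TensorProduct.map (ε ∘ₗ m c) (ε ∘ₗ m c') x)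
        = ε (m c' ((TensorProduct.lid k C) (((ε ∘ₗ m c).rTensor C) x))) := by
    intro x
    induction x using TensorProduct.induction_on with
    | zero => simp
    | tmul a b =>
        simp [LinearMap.mul'_apply, mul_comm]
    | add x y hx hy => simp [map_add, hx, hy]
  simp only [conv, LinearMap.comp_apply]
  rw [key]
  have h1 : ((ε ∘ₗ m c).rTensor C) (Δ d)
      = (ε.rTensor C) ((TensorProduct.map (m c) LinearMap.id) (Δ d)) := by
    rw [LinearMap.rTensor_comp]; rfl
  rw [h1, ← hfrob_l, hcounit_l, ← hassoc]
end
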